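/- Let Γ be a free abelian group of finite rank, ‖·‖ a norm on Γ ⊗ ℝ, ω : Γ → ℝ a group homomorphism, C > 0, β ∈ Γ, and χ ∈ ℤ. Then the set 𝔊(β, χ, C) of isomorphism classes of stable decorated graphs G with homology class β(G) = β, Euler characteristic χ(G) = χ, and ‖β_v‖ ≤ C·ω(β_v) for every vertex v, is finite. -/

import Mathlib

/-!
Stability forces every uncharged vertex to have valence greater than `2χ_v`, and counting
half-edges then gives `2χ(G) ≤ 3·#{charged vertices} - |V|`. The charges `γ = β_v` satisfy
`‖γ‖ ≤ C ω(γ) ≤ C ω(β)`, so they lie in a bounded, hence finite, part of the lattice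
`Γ ⊂ Γ ⊗ ℝ`; as nonzero lattice vectors have norm at least some `ε > 0`, each charged
vertex carries area `ω(β_v) ≥ ε / C`, so there are at most `C ω(β) / ε` of them. This
bounds `|V|`, `|E|` and all decorations, and up to relabelling only finitely many graphs
remain.
-/

/-- A decorated graph (over a group `Γ` of topological charges): a finite set `H` of
half-edges, a finite set `V` of vertices, a fixed-point-free involution `σ` on the
half-edges (whose orbits are the edges), an attaching map `π : H → V`, a charge `β_v ∈ Γ`,
an Euler characteristic `χ_v ≤ 1` and a number of internal punctures `n_v ∈ ℤ_{≥0}` for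
each vertex. -/
structure DecoratedGraph (Γ : Type*) [AddCommGroup Γ] where
  H : Type
  V : Type
  fintypeH : Fintype H
  fintypeV : Fintype V
  σ : H → H
  σ_invol : ∀ h, σ (σ h) = h
  σ_ne : ∀ h, σ h ≠ h
  π : H → V
  β : V → Γ
  χ : V → ℤ
  χ_le_one : ∀ v, χ v ≤ 1
  n : V → ℕ

attribute [instance] DecoratedGraph.fintypeH DecoratedGraph.fintypeV

namespace DecoratedGraph

variable {Γ : Type*} [AddCommGroup Γ] (G : DecoratedGraph Γ)

/-- The set of edges of a decorated graph: the orbits of the involution `σ`. -/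
def EdgeType : Type := Quot (fun a b : G.H => b = a ∨ b = G.σ a)

/-- The number of edges `|E(G)|`. -/
noncomputable def edgeCount : ℕ := Nat.card G.EdgeType

/-- The homology class `β(G) = Σ_v β_v`. -/
noncomputable def homClass : Γ := ∑ v, G.β v

/-- The Euler characteristic `χ(G) = Σ_v (χ_v − n_v) − |E(G)|`. -/
noncomputable def eulerChar : ℤ := (∑ v, (G.χ v - (G.n v : ℤ))) - (G.edgeCount : ℤ)

/-- A vertex `v` is unstable if `β_v = 0` and `2χ_v − |π⁻¹(v)| ≥ 0`; the graph is stable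
if it has no unstable vertices. -/
def Stable : Prop :=
  ∀ v : G.V, ¬ (G.β v = 0 ∧ 0 ≤ 2 * G.χ v - (Nat.card {h : G.H // G.π h = v} : ℤ))

end DecoratedGraph


/-- An isomorphism of decorated graphs: a pair of bijections on half-edges and vertices
commuting with `σ` and `π` and preserving the decorations `β̃`, `χ̃`, `ñ`. -/
def DecoratedGraph.Isomorphic {Γ : Type*} [AddCommGroup Γ]
    (G G' : DecoratedGraph Γ) : Prop :=
  ∃ (eH : G.H ≃ G'.H) (eV : G.V ≃ G'.V),
    (∀ h, eH (G.σ h) = G'.σ (eH h)) ∧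
    (∀ h, eV (G.π h) = G'.π (eH h)) ∧
    (∀ v, G'.β (eV v) = G.β v) ∧
    (∀ v, G'.χ (eV v) = G.χ v) ∧
    (∀ v, G'.n (eV v) = G.n v)

open scoped TensorProduct

section Lattice

variable (Γ : Type*) [AddCommGroup Γ]

lemma repr_baseChange_one_tmul {ι : Type*} (b : Module.Basis ι ℤ Γ) (γ : Γ) (i : ι) :
    (b.baseChange ℝ).repr ((1 : ℝ) ⊗ₜ[ℤ] γ) i = b.repr γ i := by
  simp

variable [Module.Free ℤ Γ]

lemma one_tmul_injective : Function.Injective fun γ : Γ => (1 : ℝ) ⊗ₜ[ℤ] γ := by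
  let b := Module.Free.chooseBasis ℤ Γ
  intro x y h
  apply b.repr.injective
  ext i
  exact_mod_cast (repr_baseChange_one_tmul Γ b x i).symm.trans
    ((congrArg (fun z => (b.baseChange ℝ).repr z i) h).trans
      (repr_baseChange_one_tmul Γ b y i))

variable [Module.Finite ℤ Γ] (nm : AddGroupNorm (ℝ ⊗[ℤ] Γ))
  (hnm : ∀ (c : ℝ) (x : ℝ ⊗[ℤ] Γ), nm (c • x) = |c| * nm x)
include hnm

lemma finite_setOf_norm_one_tmul_le (R : ℝ) : {γ : Γ | nm ((1 : ℝ) ⊗ₜ[ℤ] γ) ≤ R}.Finite := by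
  let : NormedAddCommGroup (ℝ ⊗[ℤ] Γ) := nm.toNormedAddCommGroup
  let : NormedSpace ℝ (ℝ ⊗[ℤ] Γ) := ⟨fun {c x} => (hnm c x).le⟩
  let b := (Module.Free.chooseBasis ℤ Γ).baseChange ℝ
  have hlattice := ZSpan.setFinite_inter b (Metric.isBounded_closedBall (x := 0) (r := R))
  refine (hlattice.preimage (one_tmul_injective Γ).injOn).subset fun γ hγ => ⟨?_, ?_⟩
  · exact mem_closedBall_zero_iff.mpr hγ
  · rw [SetLike.mem_coe, b.mem_span_iff_repr_mem ℤ]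
    intro i
    exact ⟨_, (repr_baseChange_one_tmul Γ _ γ i).symm⟩

lemma exists_pos_le_norm_one_tmul :
    ∃ ε > 0, ∀ γ : Γ, γ ≠ 0 → ε ≤ nm ((1 : ℝ) ⊗ₜ[ℤ] γ) := by
  classical
  have hpos : ∀ γ : Γ, γ ≠ 0 → 0 < nm ((1 : ℝ) ⊗ₜ[ℤ] γ) := fun γ hγ =>
    map_pos_of_ne_zero nm fun h => hγ (one_tmul_injective Γ (by simpa using h))
  let small := ((finite_setOf_norm_one_tmul_le Γ nm hnm 1).toFinset.filter (· ≠ 0)).image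
    fun γ => nm ((1 : ℝ) ⊗ₜ[ℤ] γ)
  refine ⟨(insert 1 small).min' (Finset.insert_nonempty _ _), ?_, fun γ hγ => ?_⟩
  · simp only [gt_iff_lt, Finset.lt_min'_iff, Finset.mem_insert, Finset.mem_image,
      Finset.mem_filter, Set.Finite.mem_toFinset, forall_eq_or_imp, zero_lt_one, true_and, small]
    rintro _ ⟨γ, ⟨-, hγ⟩, rfl⟩
    exact hpos γ hγ
  · by_cases h1 : nm ((1 : ℝ) ⊗ₜ[ℤ] γ) ≤ 1
    · refine Finset.min'_le _ _ (Finset.mem_insert_of_mem (Finset.mem_image_of_mem _ ?_))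
      simp [h1, hγ]
    · exact (Finset.min'_le _ _ (Finset.mem_insert_self _ _)).trans (not_le.mp h1).le

end Lattice

namespace DecoratedGraph

variable {Γ : Type*} [AddCommGroup Γ] (G : DecoratedGraph Γ)

noncomputable def degree (v : G.V) : ℕ := Nat.card {h : G.H // G.π h = v}

lemma sum_degree : ∑ v, G.degree v = Fintype.card G.H := by
  classical
  rw [← Fintype.card_congr (Equiv.sigmaFiberEquiv G.π), Fintype.card_sigma]
  exact Finset.sum_congr rfl fun v _ => Nat.card_eq_fintype_card

lemma edge_equivalence : Equivalence fun a b : G.H => b = a ∨ b = G.σ a where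
  refl _ := .inl rfl
  symm := by
    rintro a _ (rfl | rfl)
    exacts [.inl rfl, .inr (G.σ_invol a).symm]
  trans := by
    rintro a _ _ (rfl | rfl) (rfl | rfl)
    exacts [.inl rfl, .inr rfl, .inr rfl, .inl (G.σ_invol a)]

def edgeOf (h : G.H) : G.EdgeType := Quot.mk _ h

lemma edgeOf_eq_edgeOf_iff {a b : G.H} : G.edgeOf b = G.edgeOf a ↔ b = a ∨ b = G.σ a :=
  eq_comm.trans (Quot.eq.trans G.edge_equivalence.eqvGen_iff)

lemma edgeOf_surjective : Function.Surjective G.edgeOf := Quot.exists_rep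

instance : Finite G.EdgeType := Quot.finite _

lemma card_H_eq_two_mul_edgeCount : Fintype.card G.H = 2 * G.edgeCount := by
  classical
  have : Fintype G.EdgeType := Fintype.ofFinite _
  have hfiber : ∀ e, (Finset.univ.filter fun h => G.edgeOf h = e).card = 2 := by
    intro e
    obtain ⟨a, rfl⟩ := G.edgeOf_surjective e
    have : (Finset.univ.filter fun h => G.edgeOf h = G.edgeOf a) = {a, G.σ a} := by
      ext h
      simp [G.edgeOf_eq_edgeOf_iff]
    rw [this, Finset.card_pair (G.σ_ne a).symm]
  rw [edgeCount, Nat.card_eq_fintype_card, Fintype.card,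
    Finset.card_eq_sum_card_fiberwise fun h _ => Finset.mem_univ (G.edgeOf h),
    Finset.sum_congr rfl fun e _ => hfiber e, Finset.sum_const, Finset.card_univ, smul_eq_mul,
    mul_comm]

lemma two_mul_eulerChar :
    2 * G.eulerChar = ∑ v, (2 * G.χ v - 2 * G.n v - G.degree v) := by
  have hdeg : ∑ v, (G.degree v : ℤ) = 2 * G.edgeCount := by
    rw [← Nat.cast_sum, sum_degree, card_H_eq_two_mul_edgeCount, Nat.cast_mul, Nat.cast_ofNat]
  rw [Finset.sum_sub_distrib, Finset.sum_sub_distrib, hdeg, ← Finset.mul_sum, ← Finset.mul_sum,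
    eulerChar, Finset.sum_sub_distrib]
  ring

lemma one_sub_χ_add_n_nonneg (v : G.V) : 0 ≤ 1 - G.χ v + G.n v := by
  have := G.χ_le_one v
  omega

lemma card_V_sub_eulerChar :
    (Fintype.card G.V : ℤ) - G.eulerChar = ∑ v, (1 - G.χ v + G.n v) + G.edgeCount := by
  simp only [eulerChar, Finset.sum_add_distrib, Finset.sum_sub_distrib, Finset.sum_const,
    Finset.card_univ, nsmul_eq_mul, mul_one]
  ring

lemma edgeCount_le_card_V_sub_eulerChar :
    (G.edgeCount : ℤ) ≤ Fintype.card G.V - G.eulerChar := by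
  rw [card_V_sub_eulerChar]
  exact le_add_of_nonneg_left (Finset.sum_nonneg fun v _ => G.one_sub_χ_add_n_nonneg v)

lemma one_sub_χ_add_n_le_card_V_sub_eulerChar (v : G.V) :
    1 - G.χ v + G.n v ≤ Fintype.card G.V - G.eulerChar := by
  rw [card_V_sub_eulerChar]
  exact le_add_of_le_of_nonneg
    (Finset.single_le_sum (fun w _ => G.one_sub_χ_add_n_nonneg w) (Finset.mem_univ v))
    (Int.natCast_nonneg _)

lemma Stable.two_mul_eulerChar_le [DecidableEq Γ] (hG : G.Stable) :
    2 * G.eulerChar ≤ 3 * (Finset.univ.filter fun v => G.β v ≠ 0).card - Fintype.card G.V := by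
  -- A stable uncharged vertex contributes at most `-1` to `2 χ(G)`, any other at most `2`.
  have hvertex (v : G.V) :
      2 * G.χ v - 2 * G.n v - G.degree v ≤ 3 * (if G.β v ≠ 0 then 1 else 0) - 1 := by
    have := G.χ_le_one v
    by_cases hv : G.β v = 0
    · have hunstable : ¬ 0 ≤ 2 * G.χ v - G.degree v := fun h => hG v ⟨hv, h⟩
      simp only [hv, ne_eq, not_true_eq_false, if_false]
      omega
    · simp only [hv, ne_eq, not_false_eq_true, if_true]
      omega
  calc 2 * G.eulerChar ≤ ∑ v, (3 * (if G.β v ≠ 0 then 1 else 0) - 1 : ℤ) := by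
        rw [two_mul_eulerChar]
        exact Finset.sum_le_sum fun v _ => hvertex v
    _ = _ := by
        rw [Finset.sum_sub_distrib, ← Finset.mul_sum, Finset.sum_boole]
        simp

end DecoratedGraph

section Relabelling

variable {Γ : Type*} [AddCommGroup Γ]

/-- Decorated graphs on `Fin k`, `Fin m` with decorations in finite ranges: there are finitely
many, and every graph with decorations in these ranges is isomorphic to one of them. -/
abbrev FinGraphCode (S : Finset Γ) (M k m : ℕ) : Type _ :=
  {σ : Fin k → Fin k // Function.Involutive σ ∧ ∀ i, σ i ≠ i} × (Fin k → Fin m) × (Fin m → S) ×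
    (Fin m → Finset.Icc (-(M : ℤ)) 1) × (Fin m → Fin (M + 1))

def FinGraphCode.toGraph {S : Finset Γ} {M k m : ℕ} (c : FinGraphCode S M k m) :
    DecoratedGraph Γ where
  H := Fin k
  V := Fin m
  fintypeH := inferInstance
  fintypeV := inferInstance
  σ := c.1
  σ_invol := c.1.2.1
  σ_ne := c.1.2.2
  π := c.2.1
  β v := c.2.2.1 v
  χ v := c.2.2.2.1 v
  χ_le_one v := (Finset.mem_Icc.mp (c.2.2.2.1 v).2).2
  n v := c.2.2.2.2 v

lemma DecoratedGraph.exists_isomorphic_toGraph (G : DecoratedGraph Γ) (S : Finset Γ) (M : ℕ)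
    (hβ : ∀ v, G.β v ∈ S) (hχ : ∀ v, -(M : ℤ) ≤ G.χ v) (hn : ∀ v, G.n v ≤ M) :
    ∃ c : FinGraphCode S M (Fintype.card G.H) (Fintype.card G.V), G.Isomorphic c.toGraph := by
  let eH := Fintype.equivFin G.H
  let eV := Fintype.equivFin G.V
  let c : FinGraphCode S M (Fintype.card G.H) (Fintype.card G.V) :=
    (⟨eH ∘ G.σ ∘ eH.symm, fun i => by simp [G.σ_invol],
        fun i h => G.σ_ne _ (eH.eq_symm_apply.mpr h)⟩,
      eV ∘ G.π ∘ eH.symm,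
      fun v => ⟨G.β (eV.symm v), hβ _⟩,
      fun v => ⟨G.χ (eV.symm v), Finset.mem_Icc.mpr ⟨hχ _, G.χ_le_one _⟩⟩,
      fun v => ⟨G.n (eV.symm v), Nat.lt_succ_of_le (hn _)⟩)
  exact ⟨c, eH, eV, fun h => congrArg (eH ∘ G.σ) (eH.symm_apply_apply h).symm,
    fun h => congrArg (eV ∘ G.π) (eH.symm_apply_apply h).symm,
    fun v => congrArg G.β (eV.symm_apply_apply v),
    fun v => congrArg G.χ (eV.symm_apply_apply v),
    fun v => congrArg G.n (eV.symm_apply_apply v)⟩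

theorem DecoratedGraph.exists_list_isomorphic_of_bounded (S : Finset Γ) (M : ℕ) :
    ∃ l : List (DecoratedGraph Γ), ∀ G : DecoratedGraph Γ,
      Fintype.card G.H ≤ M → Fintype.card G.V ≤ M → (∀ v, G.β v ∈ S) →
      (∀ v, -(M : ℤ) ≤ G.χ v) → (∀ v, G.n v ≤ M) → ∃ G' ∈ l, G.Isomorphic G' := by
  have hfin : (⋃ k ≤ M, ⋃ m ≤ M,
      Set.range (FinGraphCode.toGraph : FinGraphCode S M k m → DecoratedGraph Γ)).Finite :=
    (Set.finite_Iic M).biUnion fun _ _ =>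
      (Set.finite_Iic M).biUnion fun _ _ => Set.finite_range _
  refine ⟨hfin.toFinset.toList, fun G hH hV hβ hχ hn => ?_⟩
  obtain ⟨c, hc⟩ := G.exists_isomorphic_toGraph S M hβ hχ hn
  refine ⟨c.toGraph, ?_, hc⟩
  simp only [Finset.mem_toList, Set.Finite.mem_toFinset, Set.mem_iUnion, Set.mem_range]
  exact ⟨_, hH, _, hV, c, rfl⟩

end Relabelling

namespace DecoratedGraph

variable {Γ : Type*} [AddCommGroup Γ] (G : DecoratedGraph Γ)
  {f : Γ → ℝ} {ω : Γ →+ ℝ} {C : ℝ}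

lemma omega_β_nonneg (hC : 0 < C) (hf : ∀ γ, 0 ≤ f γ)
    (hbd : ∀ v, f (G.β v) ≤ C * ω (G.β v)) (v : G.V) : 0 ≤ ω (G.β v) :=
  nonneg_of_mul_nonneg_right ((hf _).trans (hbd v)) hC

lemma omega_β_le_omega_homClass (hC : 0 < C) (hf : ∀ γ, 0 ≤ f γ)
    (hbd : ∀ v, f (G.β v) ≤ C * ω (G.β v)) (v : G.V) : ω (G.β v) ≤ ω G.homClass := by
  rw [homClass, map_sum]
  exact Finset.single_le_sum (fun w _ => G.omega_β_nonneg hC hf hbd w) (Finset.mem_univ v)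

lemma card_charged_mul_le [DecidableEq Γ] (hC : 0 < C) (hf : ∀ γ, 0 ≤ f γ)
    (hbd : ∀ v, f (G.β v) ≤ C * ω (G.β v)) {ε : ℝ} (hε : ∀ γ, γ ≠ 0 → ε ≤ f γ) :
    (Finset.univ.filter fun v => G.β v ≠ 0).card * ε ≤ C * ω G.homClass :=
  calc (Finset.univ.filter fun v => G.β v ≠ 0).card * ε
      = ∑ v ∈ Finset.univ.filter fun v => G.β v ≠ 0, ε := by
        rw [Finset.sum_const, nsmul_eq_mul]
    _ ≤ ∑ v ∈ Finset.univ.filter fun v => G.β v ≠ 0, C * ω (G.β v) :=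
        Finset.sum_le_sum fun v hv => (hε _ (Finset.mem_filter.mp hv).2).trans (hbd v)
    _ ≤ ∑ v, C * ω (G.β v) :=
        Finset.sum_le_sum_of_subset_of_nonneg (Finset.filter_subset _ _)
          fun v _ _ => mul_nonneg hC.le (G.omega_β_nonneg hC hf hbd v)
    _ = C * ω G.homClass := by rw [← Finset.mul_sum, homClass, map_sum]

end DecoratedGraph

/-- Let `Γ` be a free abelian group of finite rank, `nm` a norm on
`Γ ⊗ ℝ` (formalized as `ℝ ⊗[ℤ] Γ`, with `γ ↦ 1 ⊗ γ` the canonical embedding), `ω : Γ → ℝ`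
a group homomorphism, `C > 0`, `β ∈ Γ` and `χ ∈ ℤ`.  Then the set `𝔊(β, χ, C)` of
isomorphism classes of stable decorated graphs `G` with homology class `β(G) = β`, Euler
characteristic `χ(G) = χ` and `‖β_v‖ ≤ C·ω(β_v)` for every vertex `v` is finite, i.e.
there is a finite list of decorated graphs containing a representative of every such
isomorphism class. -/
theorem finitely_many_stable_graphs
    (Γ : Type*) [AddCommGroup Γ] [Module.Free ℤ Γ] [Module.Finite ℤ Γ]
    (nm : AddGroupNorm (ℝ ⊗[ℤ] Γ))
    (hnm : ∀ (c : ℝ) (x : ℝ ⊗[ℤ] Γ), nm (c • x) = |c| * nm x)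
    (ω : Γ →+ ℝ) (C : ℝ) (hC : 0 < C) (β : Γ) (χ : ℤ) :
    ∃ l : List (DecoratedGraph Γ), ∀ G : DecoratedGraph Γ,
      G.Stable → G.homClass = β → G.eulerChar = χ →
      (∀ v : G.V, nm ((1 : ℝ) ⊗ₜ[ℤ] G.β v) ≤ C * ω (G.β v)) →
      ∃ G' ∈ l, G.Isomorphic G' := by
  classical
  have hf (γ : Γ) : 0 ≤ nm ((1 : ℝ) ⊗ₜ[ℤ] γ) := apply_nonneg nm _
  obtain ⟨ε, hε, hεle⟩ := exists_pos_le_norm_one_tmul Γ nm hnm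
  let N := ⌊C * ω β / ε⌋₊
  -- With at most `N` charged vertices, `|V| ≤ 3N - 2χ`, and `|H| = 2|E|`, every `n_v` and
  -- every `1 - χ_v` are at most `2(|V| - χ) ≤ 6N - 6χ`.
  obtain ⟨l, hl⟩ := DecoratedGraph.exists_list_isomorphic_of_bounded
    (finite_setOf_norm_one_tmul_le Γ nm hnm (C * ω β)).toFinset (6 * (N + χ.natAbs))
  refine ⟨l, fun G hst hhom heul hbd => ?_⟩
  have hcharged : (Finset.univ.filter fun v => G.β v ≠ 0).card ≤ N := by
    refine Nat.le_floor ((le_div_iff₀ hε).mpr ?_)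
    simpa [hhom] using G.card_charged_mul_le hC hf hbd hεle
  have hV := hst.two_mul_eulerChar_le
  have hE := G.edgeCount_le_card_V_sub_eulerChar
  have hH := G.card_H_eq_two_mul_edgeCount
  have hvertex := G.one_sub_χ_add_n_le_card_V_sub_eulerChar
  rw [heul] at hV hE hvertex
  refine hl G (by omega) (by omega) (fun v => ?_) (fun v => by have := hvertex v; omega)
    (fun v => by have := hvertex v; have := G.χ_le_one v; omega)
  rw [Set.Finite.mem_toFinset, Set.mem_ofPred_eq, ← hhom]
  exact (hbd v).trans
    (mul_le_mul_of_nonneg_left (G.omega_β_le_omega_homClass hC hf hbd v) hC.le)
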